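/- Let v_1, v_2, v_3 be pairwise transverse decorated Lagrangians in (ℝ^{2n}, ω) with underlying Lagrangians L_1, L_2, L_3. Then the matrix Λ_{12}Λ_{32}^{−1}Λ_{31} is symmetric, and the Maslov index μ_n(L_1, L_2, L_3) equals the signature of Λ_{12}Λ_{32}^{−1}Λ_{31} (the signature of the quadratic form x ↦ ᵀx (Λ_{12}Λ_{32}^{−1}Λ_{31}) x on ℝ^n). -/

import Mathlib

open Matrix

noncomputable section

/-- The symplectic vector space `ℝ^{2n}`, with coordinates indexed by `Fin n ⊕ Fin n`. -/
abbrev V2 (n : ℕ) : Type := (Fin n ⊕ Fin n) → ℝ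

/-- The standard matrix `J = [[0, Id],[−Id, 0]]`. -/
def Jn (n : ℕ) : Matrix (Fin n ⊕ Fin n) (Fin n ⊕ Fin n) ℝ :=
  Matrix.fromBlocks 0 1 (-1) 0

/-- The standard symplectic form `ω(x,y) = ᵀx J y` on `ℝ^{2n}`. -/
def omegaForm (n : ℕ) (x y : V2 n) : ℝ := x ⬝ᵥ (Jn n).mulVec y

/-- A subspace is Lagrangian if it has dimension `n` and `ω` vanishes on it. -/
def IsLagrangian (n : ℕ) (L : Submodule ℝ (V2 n)) : Prop :=
  Module.finrank ℝ L = n ∧ ∀ x ∈ L, ∀ y ∈ L, omegaForm n x y = 0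

/-- Membership in `Sp(2n,ℝ)`: `ᵀg J g = J`. -/
def IsSymplectic (n : ℕ) (g : Matrix (Fin n ⊕ Fin n) (Fin n ⊕ Fin n) ℝ) : Prop :=
  gᵀ * Jn n * g = Jn n

/-- `φ : L → L'` is the map whose graph is `M`, i.e. `M = {e + φ e : e ∈ L}`. -/
def IsGraphMap (n : ℕ) (L M L' : Submodule ℝ (V2 n)) (φ : L →ₗ[ℝ] L') : Prop :=
  ∀ x : V2 n, x ∈ M ↔ ∃ e : L, x = (e : V2 n) + (φ e : V2 n)

/-- The largest dimension of a subspace on which `q` is positive definite. -/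
def posIndex {V : Type*} [AddCommGroup V] [Module ℝ V] (q : V → ℝ) : ℕ :=
  sSup {d : ℕ | ∃ W : Submodule ℝ V, Module.finrank ℝ W = d ∧ ∀ v ∈ W, v ≠ 0 → 0 < q v}

/-- The signature `p − q` of a quadratic form on a real vector space. -/
def signatureQ {V : Type*} [AddCommGroup V] [Module ℝ V] (q : V → ℝ) : ℤ :=
  (posIndex q : ℤ) - (posIndex (fun v => -q v) : ℤ)

/-- A decorated Lagrangian: a basis `v` of a Lagrangian subspace of `ℝ^{2n}`. -/
def IsDecorated (n : ℕ) (v : Fin n → V2 n) : Prop :=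
  LinearIndependent ℝ v ∧ IsLagrangian n (Submodule.span ℝ (Set.range v))

/-- The symplectic `Λ`-length of two decorated Lagrangians: `(Λ_{v,w})_{ij} = ω(v_i, w_j)`. -/
def LamM (n : ℕ) (v w : Fin n → V2 n) : Matrix (Fin n) (Fin n) ℝ :=
  fun i j => omegaForm n (v i) (w j)

/-! Let `Aᵢ` be the matrix whose rows are the basis `vᵢ`, so that `Λᵢⱼ = Aᵢ J Aⱼᵀ`. Since `L₂ ⊕ L₃`
is the whole space, `A₁ = P A₂ − Q A₃` for some `P, Q`; then `v₁ + Q v₃` lies in `L₂`, so the graph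
map sends `x ᵥ* A₁` to `x ᵥ* Q A₃` and the Maslov form has matrix `A₁ J (Q A₃)ᵀ`. Isotropy of `L₂`
gives `Λ₁₂ = −Q Λ₃₂`, hence `Λ₁₂ Λ₃₂⁻¹ Λ₃₁ = −Q Λ₃₁`, and isotropy of all three `Lᵢ` turns `−Q Λ₃₁`
into `A₁ J (Q A₃)ᵀ`, which is symmetric because `J` is skew. -/

section IsotropicDecomposition

variable {ι κ R : Type*} [Fintype ι] [Fintype κ] [CommRing R] {J : Matrix κ κ R}
  {A₁ A₂ A₃ : Matrix ι κ R} {P Q : Matrix ι ι R}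

lemma isotropicDecomp_cross_eq_neg (hA : A₁ = P * A₂ - Q * A₃) (h₁ : A₁ * J * A₁ᵀ = 0)
    (h₂ : A₂ * J * A₂ᵀ = 0) (h₃ : A₃ * J * A₃ᵀ = 0) :
    P * (A₂ * J * A₃ᵀ) * Qᵀ = -(Q * (A₃ * J * A₂ᵀ) * Pᵀ) := by
  have expand : A₁ * J * A₁ᵀ = P * (A₂ * J * A₂ᵀ) * Pᵀ - P * (A₂ * J * A₃ᵀ) * Qᵀ
      - Q * (A₃ * J * A₂ᵀ) * Pᵀ + Q * (A₃ * J * A₃ᵀ) * Qᵀ := by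
    rw [hA, transpose_sub, transpose_mul, transpose_mul]
    simp only [Matrix.sub_mul, Matrix.mul_sub, Matrix.mul_assoc]
    abel
  rw [h₁, h₂, h₃] at expand
  rw [eq_neg_iff_add_eq_zero, ← neg_eq_zero, neg_add]
  simpa [sub_eq_add_neg] using expand.symm

lemma isotropicDecomp_mul_transpose_eq (hA : A₁ = P * A₂ - Q * A₃) (h₁ : A₁ * J * A₁ᵀ = 0)
    (h₂ : A₂ * J * A₂ᵀ = 0) (h₃ : A₃ * J * A₃ᵀ = 0) :
    A₁ * J * (Q * A₃)ᵀ = -(Q * (A₃ * J * A₁ᵀ)) := by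
  have h₁₃ : A₁ * J * (Q * A₃)ᵀ = P * (A₂ * J * A₃ᵀ) * Qᵀ := calc
    _ = P * (A₂ * J * A₃ᵀ) * Qᵀ - Q * (A₃ * J * A₃ᵀ) * Qᵀ := by
      rw [hA, transpose_mul]
      simp only [Matrix.sub_mul, Matrix.mul_assoc]
    _ = _ := by rw [h₃, Matrix.mul_zero, Matrix.zero_mul, sub_zero]
  have h₃₁ : A₃ * J * A₁ᵀ = A₃ * J * A₂ᵀ * Pᵀ := calc
    _ = A₃ * J * A₂ᵀ * Pᵀ - A₃ * J * A₃ᵀ * Qᵀ := by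
      rw [hA, transpose_sub, transpose_mul, transpose_mul]
      simp only [Matrix.mul_sub, Matrix.mul_assoc]
    _ = _ := by rw [h₃, Matrix.zero_mul, sub_zero]
  rw [h₁₃, isotropicDecomp_cross_eq_neg hA h₁ h₂ h₃, h₃₁, Matrix.mul_assoc]

lemma isotropicDecomp_triple_product_eq [DecidableEq ι] (hA : A₁ = P * A₂ - Q * A₃)
    (h₁ : A₁ * J * A₁ᵀ = 0) (h₂ : A₂ * J * A₂ᵀ = 0) (h₃ : A₃ * J * A₃ᵀ = 0)
    (hU : IsUnit (A₃ * J * A₂ᵀ).det) :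
    A₁ * J * A₂ᵀ * (A₃ * J * A₂ᵀ)⁻¹ * (A₃ * J * A₁ᵀ) = A₁ * J * (Q * A₃)ᵀ := by
  have h₁₂ : A₁ * J * A₂ᵀ = -(Q * (A₃ * J * A₂ᵀ)) := calc
    _ = P * (A₂ * J * A₂ᵀ) - Q * (A₃ * J * A₂ᵀ) := by
      rw [hA]
      simp only [Matrix.sub_mul, Matrix.mul_assoc]
    _ = _ := by rw [h₂, Matrix.mul_zero, zero_sub]
  rw [h₁₂, Matrix.neg_mul, Matrix.mul_nonsing_inv_cancel_right _ _ hU, Matrix.neg_mul,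
    isotropicDecomp_mul_transpose_eq hA h₁ h₂ h₃]

lemma isotropicDecomp_isSymm (hJ : Jᵀ = -J) (hA : A₁ = P * A₂ - Q * A₃)
    (h₁ : A₁ * J * A₁ᵀ = 0) (h₂ : A₂ * J * A₂ᵀ = 0) (h₃ : A₃ * J * A₃ᵀ = 0) :
    (A₁ * J * (Q * A₃)ᵀ).IsSymm := by
  calc (A₁ * J * (Q * A₃)ᵀ)ᵀ = Q * (A₃ * Jᵀ * A₁ᵀ) := by
        simp only [transpose_mul, transpose_transpose, Matrix.mul_assoc]
    _ = -(Q * (A₃ * J * A₁ᵀ)) := by rw [hJ, Matrix.mul_neg, Matrix.neg_mul, Matrix.mul_neg]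
    _ = _ := (isotropicDecomp_mul_transpose_eq hA h₁ h₂ h₃).symm

end IsotropicDecomposition

lemma Jn_transpose (n : ℕ) : (Jn n)ᵀ = -Jn n := by
  rw [Jn, fromBlocks_transpose, fromBlocks_neg]
  simp

lemma Jn_mul_self (n : ℕ) : Jn n * Jn n = -1 := by
  rw [Jn, fromBlocks_multiply, ← fromBlocks_one, fromBlocks_neg]
  simp

lemma eq_zero_of_forall_omegaForm_eq_zero {n : ℕ} {u : V2 n} (h : ∀ z, omegaForm n z u = 0) :
    u = 0 := by
  have hJu : Jn n *ᵥ u = 0 := dotProduct_eq_zero_iff.mp fun z => by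
    rw [dotProduct_comm]; exact h z
  simpa [mulVec_mulVec, Jn_mul_self, neg_mulVec] using congrArg (Jn n *ᵥ ·) hJu

lemma omegaForm_vecMul_vecMul {n : ℕ} {ι κ : Type*} [Fintype ι] [Fintype κ]
    (A : Matrix ι (Fin n ⊕ Fin n) ℝ) (B : Matrix κ (Fin n ⊕ Fin n) ℝ) (x : ι → ℝ) (y : κ → ℝ) :
    omegaForm n (x ᵥ* A) (y ᵥ* B) = x ⬝ᵥ (A * Jn n * Bᵀ) *ᵥ y := by
  rw [omegaForm, ← mulVec_transpose B, mulVec_mulVec, ← dotProduct_mulVec, mulVec_mulVec,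
    Matrix.mul_assoc]

lemma lamM_eq_mul (n : ℕ) (v w : Fin n → V2 n) : LamM n v w = of v * Jn n * (of w)ᵀ := by
  ext i j
  rw [Matrix.mul_assoc]
  rfl

lemma mem_span_range_iff_exists_vecMul {n : ℕ} {v : Fin n → V2 n} {z : V2 n} :
    z ∈ Submodule.span ℝ (Set.range v) ↔ ∃ x, x ᵥ* of v = z := by
  rw [Submodule.mem_span_range_iff_exists_fun]
  simp_rw [vecMul_eq_sum]
  rfl

lemma IsDecorated.lamM_self {n : ℕ} {v : Fin n → V2 n} (hv : IsDecorated n v) :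
    LamM n v v = 0 := by
  ext i j
  exact hv.2.2 _ (Submodule.subset_span ⟨i, rfl⟩) _ (Submodule.subset_span ⟨j, rfl⟩)

lemma IsDecorated.sup_eq_top {n : ℕ} {v w : Fin n → V2 n} (hv : IsDecorated n v)
    (hw : IsDecorated n w)
    (hvw : Submodule.span ℝ (Set.range v) ⊓ Submodule.span ℝ (Set.range w) = ⊥) :
    Submodule.span ℝ (Set.range v) ⊔ Submodule.span ℝ (Set.range w) = ⊤ :=
  Submodule.eq_top_of_disjoint _ _ (by simp [hv.2.1, hw.2.1]) (disjoint_iff.mpr hvw)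

lemma exists_eq_vecMul_sub_vecMul {n : ℕ} {v w : Fin n → V2 n}
    (h : Submodule.span ℝ (Set.range v) ⊔ Submodule.span ℝ (Set.range w) = ⊤) (z : V2 n) :
    ∃ a b, z = a ᵥ* of v - b ᵥ* of w := by
  obtain ⟨y, hy, y', hy', rfl⟩ := Submodule.mem_sup.mp (h ▸ Submodule.mem_top : z ∈ _ ⊔ _)
  obtain ⟨a, rfl⟩ := mem_span_range_iff_exists_vecMul.mp hy
  obtain ⟨b, rfl⟩ := mem_span_range_iff_exists_vecMul.mp hy'
  exact ⟨a, -b, by rw [neg_vecMul, sub_neg_eq_add]⟩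

lemma exists_eq_mul_sub_mul {n : ℕ} {ι : Type*} {v w : Fin n → V2 n}
    (h : Submodule.span ℝ (Set.range v) ⊔ Submodule.span ℝ (Set.range w) = ⊤)
    (A : Matrix ι (Fin n ⊕ Fin n) ℝ) :
    ∃ P Q : Matrix ι (Fin n) ℝ, A = P * of v - Q * of w := by
  choose P Q hPQ using fun i => exists_eq_vecMul_sub_vecMul h (A i)
  exact ⟨of P, of Q, funext hPQ⟩

lemma isUnit_det_lamM {n : ℕ} {v w : Fin n → V2 n} (hv : IsDecorated n v)
    (hw : IsDecorated n w)
    (hvw : Submodule.span ℝ (Set.range v) ⊓ Submodule.span ℝ (Set.range w) = ⊥) :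
    IsUnit (LamM n v w).det := by
  rw [isUnit_iff_ne_zero, Ne, ← exists_mulVec_eq_zero_iff]
  rintro ⟨x, hx, hLx⟩
  refine hx ((vecMul_injective_iff (M := of w)).mpr hw.1 ?_)
  change x ᵥ* of w = 0 ᵥ* of w
  rw [zero_vecMul]
  refine eq_zero_of_forall_omegaForm_eq_zero fun z => ?_
  obtain ⟨a, b, rfl⟩ := exists_eq_vecMul_sub_vecMul (hv.sup_eq_top hw hvw) z
  rw [omegaForm, sub_dotProduct, ← omegaForm, ← omegaForm, omegaForm_vecMul_vecMul,
    omegaForm_vecMul_vecMul, ← lamM_eq_mul, ← lamM_eq_mul, hLx, hw.lamM_self]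
  simp

lemma IsGraphMap.coe_apply_eq {n : ℕ} {L M L' : Submodule ℝ (V2 n)} {φ : L →ₗ[ℝ] L'}
    (hφ : IsGraphMap n L M L' φ) (hML' : M ⊓ L' = ⊥) {e : L} {y : V2 n} (hy : y ∈ L')
    (hey : (e : V2 n) + y ∈ M) : (φ e : V2 n) = y := by
  have hsub : (φ e : V2 n) - y ∈ M ⊓ L' :=
    ⟨by simpa using M.sub_mem ((hφ _).mpr ⟨e, rfl⟩) hey, L'.sub_mem (φ e).2 hy⟩
  rwa [hML', Submodule.mem_bot, sub_eq_zero] at hsub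

lemma posIndex_comp_linearEquiv {V W : Type*} [AddCommGroup V] [Module ℝ V] [AddCommGroup W]
    [Module ℝ W] (e : V ≃ₗ[ℝ] W) (q : W → ℝ) : posIndex (q ∘ e) = posIndex q := by
  unfold posIndex
  congr 1
  ext d
  constructor
  · rintro ⟨S, rfl, hpos⟩
    refine ⟨S.map (e : V →ₗ[ℝ] W), LinearEquiv.finrank_map_eq _ _, ?_⟩
    rintro _ ⟨v, hv, rfl⟩ hne
    exact hpos v hv (by rintro rfl; simp at hne)
  · rintro ⟨S, rfl, hpos⟩
    refine ⟨S.map (e.symm : W →ₗ[ℝ] V), LinearEquiv.finrank_map_eq _ _, ?_⟩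
    rintro _ ⟨w, hw, rfl⟩ hne
    simpa using hpos w hw (by rintro rfl; simp at hne)

lemma signatureQ_comp_linearEquiv {V W : Type*} [AddCommGroup V] [Module ℝ V] [AddCommGroup W]
    [Module ℝ W] (e : V ≃ₗ[ℝ] W) (q : W → ℝ) : signatureQ (q ∘ e) = signatureQ q := by
  unfold signatureQ
  rw [posIndex_comp_linearEquiv, ← posIndex_comp_linearEquiv e (fun w => -q w)]
  rfl

lemma coe_basisSpan_equivFun_symm {n : ℕ} {v : Fin n → V2 n} (hv : LinearIndependent ℝ v)
    (x : Fin n → ℝ) : ((Module.Basis.span hv).equivFun.symm x : V2 n) = x ᵥ* of v := by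
  simp only [Module.Basis.equivFun_symm_apply, Module.Basis.span_apply, SetLike.mk_smul_mk,
    AddSubmonoidClass.coe_finsetSum, vecMul_eq_sum]
  rfl

theorem maslov_index_via_lambda_lengths_general (n : ℕ) (v1 v2 v3 : Fin n → V2 n)
    (h1 : IsDecorated n v1) (h2 : IsDecorated n v2) (h3 : IsDecorated n v3)
    (h23 : Submodule.span ℝ (Set.range v2) ⊓ Submodule.span ℝ (Set.range v3) = ⊥) :
    (LamM n v1 v2 * (LamM n v3 v2)⁻¹ * LamM n v3 v1).IsSymm ∧
    ∀ φ : Submodule.span ℝ (Set.range v1) →ₗ[ℝ] Submodule.span ℝ (Set.range v3),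
      IsGraphMap n (Submodule.span ℝ (Set.range v1)) (Submodule.span ℝ (Set.range v2))
        (Submodule.span ℝ (Set.range v3)) φ →
      signatureQ (fun v : ↥(Submodule.span ℝ (Set.range v1)) =>
          omegaForm n (v : V2 n) (φ v : V2 n)) =
        signatureQ (fun x : Fin n → ℝ =>
          x ⬝ᵥ (LamM n v1 v2 * (LamM n v3 v2)⁻¹ * LamM n v3 v1).mulVec x) := by
  obtain ⟨P, Q, hPQ⟩ := exists_eq_mul_sub_mul (h2.sup_eq_top h3 h23) (of v1)
  have hU := isUnit_det_lamM h3 h2 (by rwa [inf_comm])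
  have h₁ := h1.lamM_self
  have h₂ := h2.lamM_self
  have h₃ := h3.lamM_self
  simp only [lamM_eq_mul] at hU h₁ h₂ h₃ ⊢
  rw [isotropicDecomp_triple_product_eq hPQ h₁ h₂ h₃ hU]
  refine ⟨isotropicDecomp_isSymm (Jn_transpose n) hPQ h₁ h₂ h₃, fun φ hφ => ?_⟩
  have hφe (x : Fin n → ℝ) :
      (φ ((Module.Basis.span h1.1).equivFun.symm x) : V2 n) = x ᵥ* (Q * of v3) := by
    refine hφ.coe_apply_eq h23
      (mem_span_range_iff_exists_vecMul.mpr ⟨x ᵥ* Q, vecMul_vecMul _ _ _⟩) ?_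
    rw [coe_basisSpan_equivFun_symm, ← vecMul_add, hPQ, sub_add_cancel, ← vecMul_vecMul]
    exact mem_span_range_iff_exists_vecMul.mpr ⟨_, rfl⟩
  rw [← signatureQ_comp_linearEquiv (Module.Basis.span h1.1).equivFun.symm]
  congr 1
  funext x
  rw [Function.comp_apply, hφe, coe_basisSpan_equivFun_symm, omegaForm_vecMul_vecMul]

/-- The Maslov index of a pairwise transverse triple of Lagrangians is the signature of the
symmetric matrix `Λ_{12} Λ_{32}⁻¹ Λ_{31}`. -/
theorem maslov_index_via_lambda_lengths (n : ℕ) (v1 v2 v3 : Fin n → V2 n)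
    (h1 : IsDecorated n v1) (h2 : IsDecorated n v2) (h3 : IsDecorated n v3)
    (h12 : Submodule.span ℝ (Set.range v1) ⊓ Submodule.span ℝ (Set.range v2) = ⊥)
    (h23 : Submodule.span ℝ (Set.range v2) ⊓ Submodule.span ℝ (Set.range v3) = ⊥)
    (h13 : Submodule.span ℝ (Set.range v1) ⊓ Submodule.span ℝ (Set.range v3) = ⊥) :
    (LamM n v1 v2 * (LamM n v3 v2)⁻¹ * LamM n v3 v1).IsSymm ∧
    ∀ φ : Submodule.span ℝ (Set.range v1) →ₗ[ℝ] Submodule.span ℝ (Set.range v3),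
      IsGraphMap n (Submodule.span ℝ (Set.range v1)) (Submodule.span ℝ (Set.range v2))
        (Submodule.span ℝ (Set.range v3)) φ →
      signatureQ (fun v : ↥(Submodule.span ℝ (Set.range v1)) =>
          omegaForm n (v : V2 n) (φ v : V2 n)) =
        signatureQ (fun x : Fin n → ℝ =>
          x ⬝ᵥ (LamM n v1 v2 * (LamM n v3 v2)⁻¹ * LamM n v3 v1).mulVec x) :=
  maslov_index_via_lambda_lengths_general n v1 v2 v3 h1 h2 h3 h23
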